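/- Let p ∈ (1, ∞) and let D: X → [0,∞) and ‖·‖: X → [0,∞) be functionals on a set X such that τ := inf{ ‖u‖² / D(u)^{1/p} : u ∈ X, D(u) > 0 } > 0. Suppose u_n, v ∈ X with D(v) ∈ (0,1], D(u_n) = 1 for all n, lim_n ‖u_n‖² = τ, lim_n (‖u_n‖² − ‖u_n − v‖²) = ‖v‖² and lim_n (D(u_n) − D(u_n − v)) = D(v). Then D(v) = 1 and ‖v‖² = τ·D(v)^{1/p} = τ. -/
import Mathlib


open Filter

theorem choquard_brezis_lieb {X : Type*} [AddCommGroup X]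
    (p : ℝ) (hp : 1 < p) (D Nrm : X → ℝ)
    (hD0 : ∀ u, 0 ≤ D u) (hN0 : ∀ u, 0 ≤ Nrm u)
    (τ : ℝ)
    (hτ : τ = sInf {t : ℝ | ∃ u : X, 0 < D u ∧ t = Nrm u ^ 2 / D u ^ (1 / p)})
    (hτpos : 0 < τ)
    (u : ℕ → X) (v : X)
    (hDv : 0 < D v) (hDv1 : D v ≤ 1)
    (hDun : ∀ n, D (u n) = 1)
    (hmin : Tendsto (fun n => Nrm (u n) ^ 2) atTop (nhds τ))
    (hBLnorm : Tendsto (fun n => Nrm (u n) ^ 2 - Nrm (u n - v) ^ 2) atTop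
      (nhds (Nrm v ^ 2)))
    (hBLD : Tendsto (fun n => D (u n) - D (u n - v)) atTop (nhds (D v))) :
    D v = 1 ∧ Nrm v ^ 2 = τ := by
  have hp0 : (0:ℝ) < 1 / p := by positivity
  have hp1 : 1 / p < 1 := by
    rw [div_lt_one (by linarith)]; linarith
  -- the fundamental lower bound from the definition of τ
  have key : ∀ w : X, τ * D w ^ (1 / p) ≤ Nrm w ^ 2 := by
    intro w
    rcases eq_or_lt_of_le (hD0 w) with h | h
    · rw [← h, Real.zero_rpow hp0.ne', mul_zero]; positivity
    · have hb : BddBelow {t : ℝ | ∃ u : X, 0 < D u ∧ t = Nrm u ^ 2 / D u ^ (1 / p)} := by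
        refine ⟨0, ?_⟩
        rintro t ⟨w', hw', rfl⟩
        positivity
      have hτle : τ ≤ Nrm w ^ 2 / D w ^ (1 / p) := hτ ▸ csInf_le hb ⟨w, h, rfl⟩
      rw [le_div_iff₀ (by positivity)] at hτle
      exact hτle
  -- D (u n - v) → 1 - D v
  have h1 : Tendsto (fun n => (1:ℝ) - (D (u n) - D (u n - v))) atTop (nhds (1 - D v)) :=
    tendsto_const_nhds.sub hBLD
  have hDlim : Tendsto (fun n => D (u n - v)) atTop (nhds (1 - D v)) :=
    h1.congr (fun n => by rw [hDun n]; ring)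
  have hrpow : Tendsto (fun n => D (u n - v) ^ (1 / p)) atTop
      (nhds ((1 - D v) ^ (1 / p))) := hDlim.rpow_const (Or.inr hp0.le)
  have hineq : Nrm v ^ 2 + τ * (1 - D v) ^ (1 / p) ≤ τ := by
    refine le_of_tendsto_of_tendsto' (hBLnorm.add (hrpow.const_mul τ)) hmin ?_
    intro n
    have := key (u n - v)
    linarith
  have hkv := key v
  have hDv1' : D v = 1 := by
    by_contra hne
    have hlt : D v < 1 := lt_of_le_of_ne hDv1 hne
    have h2 : D v < D v ^ (1 / p) := by
      have := Real.rpow_lt_rpow_of_exponent_gt hDv hlt hp1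
      rwa [Real.rpow_one] at this
    have h3 : 1 - D v < (1 - D v) ^ (1 / p) := by
      have := Real.rpow_lt_rpow_of_exponent_gt (x := 1 - D v) (by linarith) (by linarith) hp1
      rwa [Real.rpow_one] at this
    have h4 : τ * (D v ^ (1 / p) + (1 - D v) ^ (1 / p)) ≤ τ * 1 := by
      rw [mul_add, mul_one]; linarith
    have h5 : D v ^ (1 / p) + (1 - D v) ^ (1 / p) ≤ 1 := le_of_mul_le_mul_left h4 hτpos
    linarith
  refine ⟨hDv1', ?_⟩
  rw [hDv1'] at hineq hkv
  rw [Real.one_rpow, mul_one] at hkv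
  rw [sub_self, Real.zero_rpow hp0.ne', mul_zero, add_zero] at hineq
  linarith
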